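/- arXiv:1110.4606 — 5 statements merged into one kernel-verified Lean document; each statement's English description precedes it below -/
import Mathlib

section
/- Let Ω ⊆ ℝ² be open, let B : Ω → ℝ^{2×2} be a C¹ map valued in symmetric 2×2 matrices, and let θ : Ω → ℝ be C¹. Let R₁ := (cos θ, sin θ) and R₂ := (−sin θ, cos θ), and let B_j denote the j-th column of B. Then at every point of Ω: [B R₂, B R₁] = B² ∇θ + [B₂, B₁], where [U,V] := (U·∇)V − (V·∇)U. -/
/-
Since `B R₁ = cos θ B₁ + sin θ B₂` and `B R₂ = cos θ B₂ - sin θ B₁`, the two fields are the columns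
of `B` rotated by `θ`. In the Leibniz expansion of their bracket, the terms without derivatives of
`θ` recombine to `[B₂, B₁]` because `cos² θ + sin² θ = 1`, and the remaining terms
`(∇θ · B Rᵢ) B Rᵢ` sum to `B (R₁R₁ᵀ + R₂R₂ᵀ) B ∇θ = B² ∇θ`, as `B` is symmetric.
-/

open Matrix

noncomputable section

abbrev V2 : Type := Fin 2 → ℝ
abbrev M2 : Type := Matrix (Fin 2) (Fin 2) ℝ

def Jmat : M2 := !![0, -1; 1, 0]

def Umat : M2 := !![1, 0; 0, -1]

def det2 (a b : V2) : ℝ := a 0 * b 1 - a 1 * b 0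

noncomputable def gradv (f : V2 → ℝ) (x : V2) : V2 :=
  fun i => fderiv ℝ f x (Pi.single i 1)

noncomputable def divv (W : V2 → V2) (x : V2) : ℝ :=
  ∑ i, fderiv ℝ (fun y => W y i) x (Pi.single i 1)

noncomputable def divOp (γ : V2 → M2) (u : V2 → ℝ) (x : V2) : ℝ :=
  divv (fun y => γ y *ᵥ gradv u y) x

noncomputable def Svec (A : V2 → M2) (u : V2 → ℝ) (x : V2) : V2 :=
  A x *ᵥ gradv u x

noncomputable def Atil (A : V2 → M2) (x : V2) : M2 :=
  (Real.sqrt (A x).det)⁻¹ • A x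

noncomputable def Hmat (A : V2 → M2) (u : Fin 2 → V2 → ℝ) (x : V2) : M2 :=
  Matrix.of fun i j => Svec A (u i) x ⬝ᵥ Svec A (u j) x

noncomputable def Smat (A : V2 → M2) (u : Fin 2 → V2 → ℝ) (x : V2) : M2 :=
  Matrix.of fun i j => Svec A (u j) x i

noncomputable def Vf (T : V2 → M2) (i j : Fin 2) (x : V2) : V2 :=
  ∑ k, ((T x)⁻¹ k j) • gradv (fun y => T y i k) x

noncomputable def lieB (U W : V2 → V2) (x : V2) : V2 :=
  fun j => (∑ i, U x i * fderiv ℝ (fun y => W y j) x (Pi.single i 1))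
         - (∑ i, W x i * fderiv ℝ (fun y => U y j) x (Pi.single i 1))

def colf (B : V2 → M2) (j : Fin 2) : V2 → V2 := fun x i => B x i j

noncomputable def Nvec (A : V2 → M2) (u : Fin 2 → V2 → ℝ) (x : V2) : V2 :=
  (1/2 : ℝ) • gradv (fun y => Real.log (Hmat A u y).det) x

noncomputable def unitv (v : V2) : V2 := (Real.sqrt (v ⬝ᵥ v))⁻¹ • v

noncomputable def Mparam (a b : ℝ) : M2 := !![a, b; b, (1 + b^2)/a]

noncomputable def Rcol (A : V2 → M2) (u : Fin 2 → V2 → ℝ) (T : V2 → M2) (i : Fin 2) (x : V2) : V2 :=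
  fun j => (Smat A u x * (T x)ᵀ) j i

noncomputable def Rot (t : ℝ) : M2 := !![Real.cos t, -Real.sin t; Real.sin t, Real.cos t]

open Real Topology

theorem sum_smul_map_single {ι F : Type*} [Fintype ι] [DecidableEq ι] [AddCommGroup F]
    [Module ℝ F] [TopologicalSpace F] (L : (ι → ℝ) →L[ℝ] F) (v : ι → ℝ) :
    ∑ i, v i • L (Pi.single i 1) = L v := by
  conv_rhs => rw [pi_eq_sum_univ' v, map_sum]
  simp only [map_smul]

theorem gradv_dotProduct (f : V2 → ℝ) (x v : V2) : gradv f x ⬝ᵥ v = fderiv ℝ f x v := by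
  simpa [gradv, dotProduct, mul_comm] using sum_smul_map_single (fderiv ℝ f x) v

theorem lieB_eq_fderiv {U W : V2 → V2} {x : V2} (hU : DifferentiableAt ℝ U x)
    (hW : DifferentiableAt ℝ W x) :
    lieB U W x = fderiv ℝ W x (U x) - fderiv ℝ U x (W x) := by
  funext j
  simp only [lieB, fderiv_apply hU, fderiv_apply hW, Pi.sub_apply,
    ContinuousLinearMap.comp_apply, ContinuousLinearMap.proj_apply]
  rw [← sum_smul_map_single (fderiv ℝ W x) (U x), ← sum_smul_map_single (fderiv ℝ U x) (W x)]
  simp [Finset.sum_apply]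

theorem mulVec_cos_sin (M : M2) (t : ℝ) :
    M *ᵥ ![cos t, sin t] = cos t • M.col 0 + sin t • M.col 1 := by
  ext i
  simp [mulVec, dotProduct, Fin.sum_univ_two, mul_comm]

theorem mulVec_neg_sin_cos (M : M2) (t : ℝ) :
    M *ᵥ ![-sin t, cos t] = cos t • M.col 1 + sin t • -M.col 0 := by
  ext i
  simp [mulVec, dotProduct, Fin.sum_univ_two]
  ring

theorem hasFDerivAt_cos_smul_add_sin_smul {E F : Type*} [NormedAddCommGroup E] [NormedSpace ℝ E]
    [NormedAddCommGroup F] [NormedSpace ℝ F] {θ : E → ℝ} {U W : E → F} {θ' : E →L[ℝ] ℝ}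
    {U' W' : E →L[ℝ] F} {x : E} (hθ : HasFDerivAt θ θ' x) (hU : HasFDerivAt U U' x)
    (hW : HasFDerivAt W W' x) :
    HasFDerivAt (fun y => cos (θ y) • U y + sin (θ y) • W y)
      (cos (θ x) • U' + sin (θ x) • W' +
        θ'.smulRight (cos (θ x) • W x + sin (θ x) • -U x)) x := by
  refine ((hθ.cos.smul hU).add (hθ.sin.smul hW)).congr_fderiv ?_
  ext v
  simp
  module

theorem sub_map_rotate_eq {V W : Type*} [AddCommGroup V] [Module ℝ V] [AddCommGroup W]
    [Module ℝ W] (D₀ D₁ : V →ₗ[ℝ] W) (b₀ b₁ : V) {c s : ℝ} (hcs : c ^ 2 + s ^ 2 = 1) :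
    c • D₀ (c • b₁ + s • -b₀) + s • D₁ (c • b₁ + s • -b₀)
      - (c • D₁ (c • b₀ + s • b₁) + s • -D₀ (c • b₀ + s • b₁)) = D₀ b₁ - D₁ b₀ := by
  simp only [map_add, map_smul, map_neg]
  linear_combination (norm := module) hcs • (D₀ b₁ - D₁ b₀)

theorem lieB_rotate {U W : V2 → V2} {θ : V2 → ℝ} {x : V2} (hU : DifferentiableAt ℝ U x)
    (hW : DifferentiableAt ℝ W x) (hθ : DifferentiableAt ℝ θ x) :
    lieB (fun y => cos (θ y) • W y + sin (θ y) • -U y)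
        (fun y => cos (θ y) • U y + sin (θ y) • W y) x
      = fderiv ℝ θ x (cos (θ x) • W x + sin (θ x) • -U x) • (cos (θ x) • W x + sin (θ x) • -U x)
        + fderiv ℝ θ x (cos (θ x) • U x + sin (θ x) • W x) • (cos (θ x) • U x + sin (θ x) • W x)
        + lieB W U x := by
  have hY := hasFDerivAt_cos_smul_add_sin_smul hθ.hasFDerivAt hU.hasFDerivAt hW.hasFDerivAt
  have hX : HasFDerivAt (fun y => cos (θ y) • W y + sin (θ y) • -U y) _ x :=
    hasFDerivAt_cos_smul_add_sin_smul hθ.hasFDerivAt hW.hasFDerivAt hU.hasFDerivAt.neg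
  have hrot := sub_map_rotate_eq (fderiv ℝ U x).toLinearMap (fderiv ℝ W x).toLinearMap (U x) (W x)
    (cos_sq_add_sin_sq (θ x))
  rw [lieB_eq_fderiv hX.differentiableAt hY.differentiableAt, hX.fderiv, hY.fderiv,
    lieB_eq_fderiv hW hU]
  simp only [ContinuousLinearMap.coe_coe] at hrot
  simp only [_root_.add_apply, _root_.smul_apply, _root_.neg_apply,
    ContinuousLinearMap.smulRight_apply]
  linear_combination (norm := module) hrot

theorem dotProduct_smul_rotated_cols_add (M : M2) (hM : M.IsSymm) (g : V2) {c s : ℝ}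
    (hcs : c ^ 2 + s ^ 2 = 1) :
    (g ⬝ᵥ (c • M.col 1 + s • -M.col 0)) • (c • M.col 1 + s • -M.col 0)
      + (g ⬝ᵥ (c • M.col 0 + s • M.col 1)) • (c • M.col 0 + s • M.col 1) = (M * M) *ᵥ g := by
  have h10 : M 1 0 = M 0 1 := congrFun (congrFun hM 0) 1
  calc _ = (c ^ 2 + s ^ 2) • ((M * M) *ᵥ g) := by
        ext i
        fin_cases i <;> simp [dotProduct, Matrix.mul_apply, Fin.sum_univ_two, h10] <;> ring
    _ = (M * M) *ᵥ g := by rw [hcs, one_smul]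

theorem stmt10 (Ω : Set V2) (hΩ : IsOpen Ω)
    (B : V2 → M2) (hBsym : ∀ x ∈ Ω, (B x).IsSymm)
    (hB : ∀ i j, ContDiffOn ℝ 1 (fun x => B x i j) Ω)
    (θ : V2 → ℝ) (hθ : ContDiffOn ℝ 1 θ Ω) :
    ∀ x ∈ Ω,
      lieB (fun y => B y *ᵥ ![-Real.sin (θ y), Real.cos (θ y)])
           (fun y => B y *ᵥ ![Real.cos (θ y), Real.sin (θ y)]) x
        = (B x * B x) *ᵥ gradv θ x + lieB (colf B 1) (colf B 0) x := by
  intro x hx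
  have hxΩ : Ω ∈ 𝓝 x := hΩ.mem_nhds hx
  have hθx : DifferentiableAt ℝ θ x := (hθ.differentiableOn one_ne_zero).differentiableAt hxΩ
  have hcol (j : Fin 2) : DifferentiableAt ℝ (colf B j) x :=
    differentiableAt_pi.2 fun i => ((hB i j).differentiableOn one_ne_zero).differentiableAt hxΩ
  have hR₁ : (fun y => B y *ᵥ ![cos (θ y), sin (θ y)])
      = fun y => cos (θ y) • colf B 0 y + sin (θ y) • colf B 1 y :=
    funext fun y => mulVec_cos_sin (B y) (θ y)
  have hR₂ : (fun y => B y *ᵥ ![-sin (θ y), cos (θ y)])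
      = fun y => cos (θ y) • colf B 1 y + sin (θ y) • -colf B 0 y :=
    funext fun y => mulVec_neg_sin_cos (B y) (θ y)
  rw [hR₁, hR₂, lieB_rotate (hcol 0) (hcol 1) hθx,
    ← dotProduct_smul_rotated_cols_add (B x) (hBsym x hx) (gradv θ x) (cos_sq_add_sin_sq (θ x))]
  simp only [gradv_dotProduct]
  rfl

end
end

section
/- Let Ã be a symmetric 2×2 real matrix with det Ã = 1, let θ ∈ ℝ with R₁ := (cos θ, sin θ), R₂ := (−sin θ, cos θ), and let N, W ∈ ℝ². Define the scalars a₁ := −½ N·(Ã R₁) + W·(Ã R₂) and a₂ := −½ N·(Ã R₂) − W·(Ã R₁). Then a₁ (Ã R₂) − a₂ (Ã R₁) = Ã² W − ½ J N. -/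
open Matrix

noncomputable section

theorem stmt13 (A : M2) (hA : A.IsSymm) (hdet : A.det = 1) (θ : ℝ) (N W : V2) :
    (-(1/2 : ℝ) * (N ⬝ᵥ (A *ᵥ ![Real.cos θ, Real.sin θ])) + W ⬝ᵥ (A *ᵥ ![-Real.sin θ, Real.cos θ]))
        • (A *ᵥ ![-Real.sin θ, Real.cos θ])
      - (-(1/2 : ℝ) * (N ⬝ᵥ (A *ᵥ ![-Real.sin θ, Real.cos θ])) - W ⬝ᵥ (A *ᵥ ![Real.cos θ, Real.sin θ]))
        • (A *ᵥ ![Real.cos θ, Real.sin θ])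
      = (A * A) *ᵥ W - (1/2 : ℝ) • (Jmat *ᵥ N) := by
  have hsym : A 1 0 = A 0 1 := by
    have := hA; rw [Matrix.IsSymm] at this
    have := congrFun (congrFun this 0) 1
    simpa [Matrix.transpose_apply] using this
  have hd : A 0 0 * A 1 1 - A 0 1 * A 1 0 = 1 := by
    have := hdet; rw [Matrix.det_fin_two] at this; linarith
  have hcs : Real.cos θ ^ 2 + Real.sin θ ^ 2 = 1 := by
    rw [add_comm]; exact Real.sin_sq_add_cos_sq θ
  funext i
  fin_cases i <;>
    simp only [Jmat, Matrix.mulVec, dotProduct, Matrix.mul_apply, Fin.sum_univ_two,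
      Matrix.cons_val_zero, Matrix.cons_val_one, Matrix.head_cons, Pi.sub_apply,
      Pi.smul_apply, smul_eq_mul, Matrix.of_apply, Fin.mk_zero, Fin.mk_one] <;>
    rw [hsym] at hd ⊢
  · linear_combination (A 0 0^2*W 0 + A 0 1^2*W 0 + A 0 0*A 0 1*W 1 + A 0 1*A 1 1*W 1
        + (1/2)*A 0 0*A 1 1*N 1 - (1/2)*A 0 1^2*N 1) * hcs + (1/2)*N 1 * hd
  · linear_combination (A 1 1^2*W 1 + A 0 1^2*W 1 + A 0 1*A 1 1*W 0 + A 0 0*A 0 1*W 0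
        + (1/2)*A 0 1^2*N 0 - (1/2)*A 0 0*A 1 1*N 0) * hcs - (1/2)*N 0 * hd
end
end

section
/- For ξ > 0 and ζ ∈ ℝ, let M(ξ,ζ) be the symmetric unit-determinant matrix [[ξ, ζ],[ζ, (1+ζ²)/ξ]]. Suppose X = (x₁,x₂) and Y = (y₁,y₂) in ℝ² satisfy M(ξ,ζ) X = Y and X·Y ≠ 0. Then ξ = (X·Y)^{-1} ( y₁² + x₂² ) and ζ = (X·Y)^{-1} ( y₁ y₂ − x₁ x₂ ). -/
open Matrix

noncomputable section

theorem stmt15 (ξ ζ : ℝ) (hξ : 0 < ξ) (X Y : V2)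
    (h : Mparam ξ ζ *ᵥ X = Y) (hXY : X ⬝ᵥ Y ≠ 0) :
    ξ = (X ⬝ᵥ Y)⁻¹ * ((Y 0)^2 + (X 1)^2) ∧
    ζ = (X ⬝ᵥ Y)⁻¹ * (Y 0 * Y 1 - X 0 * X 1) := by
  have h0 := congrFun h 0
  have h1 := congrFun h 1
  simp [Mparam, Matrix.mulVec, dotProduct, Fin.sum_univ_two] at h0 h1
  simp only [dotProduct, Fin.sum_univ_two] at hXY ⊢
  have hξ' : ξ ≠ 0 := ne_of_gt hξ
  constructor
  · rw [eq_inv_mul_iff_mul_eq₀ hXY]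
    field_simp at h1
    linear_combination (Y 0 + ζ * X 1) * h0 - X 1 * h1
  · rw [eq_inv_mul_iff_mul_eq₀ hXY]
    field_simp at h1
    linear_combination (Y 1 - ζ * X 0) * h0 + X 0 * h1

end
end

section
/- For a > 0 and b ∈ ℝ let M(a,b) := [[a, b],[b, (1+b²)/a]]. Fix ξ > 0 and ζ ∈ ℝ, and set r := ( ξ / ( ζ² + (1+ξ)² ) )^{1/2}, λ := (1+ξ) r, and μ := ζ r. Then λ > 0 and M(λ,μ)² = M(ξ,ζ). Moreover, if λ' > 0 and μ' ∈ ℝ satisfy M(λ',μ')² = M(ξ,ζ), then λ' = λ and μ' = μ. -/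
open Matrix

noncomputable section

lemma Mparam_sq_of (ξ ζ a b : ℝ) (ha : 0 < a) (h1 : a^2 + b^2 = ξ)
    (h2 : b * (1 + ξ) = ζ * a) : Mparam a b * Mparam a b = Mparam ξ ζ := by
  have ha' : a ≠ 0 := ne_of_gt ha
  have hξ : 0 < ξ := by nlinarith
  have hξ' : ξ ≠ 0 := ne_of_gt hξ
  ext i j
  fin_cases i <;> fin_cases j <;>
    simp [Mparam, Matrix.mul_apply, Fin.sum_univ_two]
  · linear_combination h1
  · field_simp
    linear_combination b * h1 + h2
  · field_simp
    linear_combination b * h1 + h2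
  · field_simp
    linear_combination (b^2*(2+ξ+a^2+b^2) - (a^2*b^2+(1+b^2)^2)) * h1
      + (b*(1+ξ)+ζ*a) * h2

lemma Mparam_sq_iff (ξ ζ a b : ℝ) (ha : 0 < a)
    (h : Mparam a b * Mparam a b = Mparam ξ ζ) :
    a^2 + b^2 = ξ ∧ b * (1 + ξ) = ζ * a := by
  have ha' : a ≠ 0 := ne_of_gt ha
  have h00 := congrArg (fun M : M2 => M 0 0) h
  have h01 := congrArg (fun M : M2 => M 0 1) h
  simp [Mparam, Matrix.mul_apply, Fin.sum_univ_two] at h00 h01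
  constructor
  · linear_combination h00
  · field_simp at h01
    linear_combination h01 - b * h00

theorem stmt17 (ξ ζ : ℝ) (hξ : 0 < ξ) :
    0 < (1 + ξ) * Real.sqrt (ξ / (ζ^2 + (1+ξ)^2)) ∧
    Mparam ((1 + ξ) * Real.sqrt (ξ / (ζ^2 + (1+ξ)^2))) (ζ * Real.sqrt (ξ / (ζ^2 + (1+ξ)^2)))
      * Mparam ((1 + ξ) * Real.sqrt (ξ / (ζ^2 + (1+ξ)^2))) (ζ * Real.sqrt (ξ / (ζ^2 + (1+ξ)^2)))
      = Mparam ξ ζ ∧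
    ∀ lam' mu' : ℝ, 0 < lam' → Mparam lam' mu' * Mparam lam' mu' = Mparam ξ ζ →
      lam' = (1 + ξ) * Real.sqrt (ξ / (ζ^2 + (1+ξ)^2)) ∧
      mu' = ζ * Real.sqrt (ξ / (ζ^2 + (1+ξ)^2)) := by
  set D : ℝ := ζ^2 + (1+ξ)^2 with hDdef
  have hD : 0 < D := by positivity
  set r : ℝ := Real.sqrt (ξ / D) with hrdef
  have hr2 : r^2 = ξ / D := Real.sq_sqrt (by positivity)
  have hr : 0 < r := Real.sqrt_pos.mpr (by positivity)
  have hlam : 0 < (1 + ξ) * r := by positivity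
  have h1 : ((1+ξ)*r)^2 + (ζ*r)^2 = ξ := by
    have : ((1+ξ)^2 + ζ^2) * r^2 = ξ := by
      rw [hr2]; field_simp [hDdef]; ring
    nlinarith [this]
  have h2 : (ζ*r) * (1 + ξ) = ζ * ((1+ξ)*r) := by ring
  refine ⟨hlam, Mparam_sq_of ξ ζ _ _ hlam h1 h2, ?_⟩
  intro a b ha hM
  obtain ⟨e1, e2⟩ := Mparam_sq_iff ξ ζ a b ha hM
  have h1ξ : (0:ℝ) < 1 + ξ := by linarith
  have hb : b = ζ * a / (1 + ξ) := by field_simp; linarith [e2]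
  have ha2 : a^2 = ((1+ξ)*r)^2 := by
    have : a^2 * D = ξ * (1+ξ)^2 := by
      rw [hb] at e1
      field_simp at e1
      nlinarith [e1]
    have h2' : ((1+ξ)*r)^2 = ξ * (1+ξ)^2 / D := by
      rw [mul_pow, hr2]; ring
    rw [h2']
    field_simp
    linarith [this]
  have haeq : a = (1+ξ)*r := by
    have hz : (a - (1+ξ)*r) * (a + (1+ξ)*r) = 0 := by linear_combination ha2
    rcases mul_eq_zero.mp hz with h | h
    · linarith
    · nlinarith
  refine ⟨haeq, ?_⟩
  rw [hb, haeq]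
  field_simp

end
end

section
/- Let κ, κ₀ ≥ 1. Let H and B be symmetric positive definite 2×2 real matrices such that κ^{-1}|v|² ≤ (Hv)·v ≤ κ|v|² for all v ∈ ℝ², det B = 1, and κ₀^{-1}|v|² ≤ (Bv)·v ≤ κ₀|v|² for all v ∈ ℝ². Then for all ξ₁, ξ₂ ∈ ℝ²: Σ_{k,i=1}^{2} (det H)^{1/2} (H^{-1})_{ki} ( B² ξ_i )·ξ_k ≥ κ^{-2} κ₀^{-2} ( |ξ₁|² + |ξ₂|² ). -/
open Matrix

noncomputable section

/-!
Writing `η j = ((B ξ 0) j, (B ξ 1) j)` and using `(B² ξ i) ⬝ᵥ ξ k = B ξ i ⬝ᵥ B ξ k`, the form is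
`√(det H) * ∑ j, η j ⬝ᵥ H⁻¹ η j`. Now `H ≤ κ` gives `H⁻¹ ≥ κ⁻¹`, `H ≥ κ⁻¹` gives `det H ≥ κ⁻²`
(all eigenvalues are `≥ κ⁻¹`), and `B ≥ κ₀⁻¹` gives `|B ξ|² ≥ κ₀⁻² |ξ|²`; and
`∑ j, |η j|² = ∑ i, |B ξ i|²`.
-/

namespace Matrix

section Rearrange

variable {ι m R : Type*} [Fintype ι] [Fintype m] [CommSemiring R]

lemma sum_sum_mul_dotProduct_eq_sum_mulVec_dotProduct (M : Matrix ι ι R) (x : ι → m → R) :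
    ∑ k, ∑ i, M k i * (x i ⬝ᵥ x k) = ∑ j, (M *ᵥ fun i => x i j) ⬝ᵥ fun i => x i j := by
  simp only [dotProduct, mulVec, Finset.sum_mul, Finset.mul_sum, mul_assoc]
  conv_rhs => rw [Finset.sum_comm]
  refine Finset.sum_congr rfl fun k _ => ?_
  rw [Finset.sum_comm]

lemma sum_dotProduct_self_comm (x : ι → m → R) :
    ∑ j, (fun i => x i j) ⬝ᵥ (fun i => x i j) = ∑ i, x i ⬝ᵥ x i := by
  simp only [dotProduct]
  exact Finset.sum_comm

end Rearrange

variable {n : Type*} [Fintype n]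

lemma IsSymm.mulVec_dotProduct_comm {A : Matrix n n ℝ} (hA : A.IsSymm) (x y : n → ℝ) :
    (A *ᵥ x) ⬝ᵥ y = x ⬝ᵥ (A *ᵥ y) := by
  rw [dotProduct_mulVec, ← mulVec_transpose, hA.eq]

lemma IsSymm.mul_self_mulVec_dotProduct {A : Matrix n n ℝ} (hA : A.IsSymm) (x y : n → ℝ) :
    ((A * A) *ᵥ x) ⬝ᵥ y = (A *ᵥ x) ⬝ᵥ (A *ᵥ y) := by
  rw [← mulVec_mulVec, hA.mulVec_dotProduct_comm]

-- Expand `0 ≤ |A v - c v|²` and use the lower bound on the cross term.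
lemma sq_mul_dotProduct_le_mulVec_dotProduct_mulVec {A : Matrix n n ℝ} {c : ℝ} (hc : 0 ≤ c)
    {v : n → ℝ} (hv : c * (v ⬝ᵥ v) ≤ (A *ᵥ v) ⬝ᵥ v) :
    c ^ 2 * (v ⬝ᵥ v) ≤ (A *ᵥ v) ⬝ᵥ (A *ᵥ v) := by
  have h := dotProduct_self_star_nonneg (A *ᵥ v - c • v)
  simp only [star_trivial, sub_dotProduct, dotProduct_sub, smul_dotProduct, dotProduct_smul,
    smul_eq_mul, dotProduct_comm v (A *ᵥ v)] at h
  nlinarith [mul_le_mul_of_nonneg_left hv hc]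

variable [DecidableEq n]

-- With `w = H⁻¹ v`, expand `0 ≤ (H (w - κ⁻¹ v)) ⬝ᵥ (w - κ⁻¹ v)`.
lemma PosDef.inv_mul_dotProduct_le_inv_mulVec_dotProduct {H : Matrix n n ℝ} (hH : H.PosDef)
    {κ : ℝ} (hκ : ∀ v, (H *ᵥ v) ⬝ᵥ v ≤ κ * (v ⬝ᵥ v)) (v : n → ℝ) :
    κ⁻¹ * (v ⬝ᵥ v) ≤ (H⁻¹ *ᵥ v) ⬝ᵥ v := by
  set w := H⁻¹ *ᵥ v
  have hHw : H *ᵥ w = v := by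
    rw [mulVec_mulVec, mul_nonsing_inv _ hH.det_pos.ne'.isUnit, one_mulVec]
  have hvw : (H *ᵥ v) ⬝ᵥ w = v ⬝ᵥ v := by
    have hS : H.IsSymm := hH.isHermitian
    rw [hS.mulVec_dotProduct_comm, hHw]
  have hq := hH.posSemidef.dotProduct_mulVec_nonneg (w - κ⁻¹ • v)
  simp only [star_trivial, mulVec_sub, mulVec_smul, hHw, sub_dotProduct, dotProduct_sub,
    smul_dotProduct, dotProduct_smul, smul_eq_mul, dotProduct_comm w (H *ᵥ v), hvw,
    dotProduct_comm v (H *ᵥ v)] at hq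
  have hκv := mul_le_mul_of_nonneg_left (hκ v) (sq_nonneg κ⁻¹)
  -- also true at `κ = 0`, where `0⁻¹ = 0`
  have hκκ : κ⁻¹ ^ 2 * (κ * (v ⬝ᵥ v)) = κ⁻¹ * (v ⬝ᵥ v) := by
    rcases eq_or_ne κ 0 with h | h
    · simp [h]
    · field_simp
  linarith [dotProduct_comm w v]

lemma IsHermitian.pow_card_le_det {H : Matrix n n ℝ} (hH : H.IsHermitian) {c : ℝ} (hc : 0 ≤ c)
    (h : ∀ v, c * (v ⬝ᵥ v) ≤ (H *ᵥ v) ⬝ᵥ v) : c ^ Fintype.card n ≤ H.det := by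
  have hev : ∀ i, c ≤ hH.eigenvalues i := by
    intro i
    have hunit : (hH.eigenvectorBasis i).ofLp ⬝ᵥ (hH.eigenvectorBasis i).ofLp = 1 := by
      have h1 := real_inner_self_eq_norm_sq (hH.eigenvectorBasis i)
      rwa [EuclideanSpace.inner_eq_star_dotProduct, star_trivial,
        hH.eigenvectorBasis.orthonormal.1 i, one_pow] at h1
    simpa [hH.eigenvalues_eq, hunit, dotProduct_comm] using h (hH.eigenvectorBasis i)
  rw [hH.det_eq_prod_eigenvalues, ← Finset.card_univ, ← Finset.prod_const]
  exact Finset.prod_le_prod (fun _ _ => hc) (fun i _ => by simpa using hev i)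

end Matrix

theorem stmt18_general (κ κ₀ : ℝ) (hκ : 1 ≤ κ) (hκ₀ : 1 ≤ κ₀)
    (H B : M2) (hH : H.PosDef) (hB : B.PosDef)
    (hHb : ∀ v : V2, κ⁻¹ * (v ⬝ᵥ v) ≤ (H *ᵥ v) ⬝ᵥ v ∧ (H *ᵥ v) ⬝ᵥ v ≤ κ * (v ⬝ᵥ v))
    (hBb : ∀ v : V2, κ₀⁻¹ * (v ⬝ᵥ v) ≤ (B *ᵥ v) ⬝ᵥ v ∧ (B *ᵥ v) ⬝ᵥ v ≤ κ₀ * (v ⬝ᵥ v))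
    (ξ : Fin 2 → V2) :
    (κ⁻¹)^2 * (κ₀⁻¹)^2 * (ξ 0 ⬝ᵥ ξ 0 + ξ 1 ⬝ᵥ ξ 1)
      ≤ ∑ k, ∑ i, Real.sqrt H.det * H⁻¹ k i * (((B * B) *ᵥ ξ i) ⬝ᵥ ξ k) := by
  have hκ' : 0 ≤ κ⁻¹ := by positivity
  have hsqrt_det : κ⁻¹ ≤ Real.sqrt H.det := by
    refine (Real.le_sqrt hκ' hH.det_pos.le).mpr ?_
    simpa using hH.isHermitian.pow_card_le_det hκ' fun v => (hHb v).1
  set η : Fin 2 → V2 := fun j i => (B *ᵥ ξ i) j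
  have hBS : B.IsSymm := hB.isHermitian
  calc (κ⁻¹)^2 * (κ₀⁻¹)^2 * (ξ 0 ⬝ᵥ ξ 0 + ξ 1 ⬝ᵥ ξ 1)
      = κ⁻¹ * (κ⁻¹ * ∑ i, (κ₀⁻¹) ^ 2 * (ξ i ⬝ᵥ ξ i)) := by
        rw [Fin.sum_univ_two]; ring
    _ ≤ κ⁻¹ * (κ⁻¹ * ∑ i, (B *ᵥ ξ i) ⬝ᵥ (B *ᵥ ξ i)) := by
        gcongr with i
        exact sq_mul_dotProduct_le_mulVec_dotProduct_mulVec (by positivity) (hBb (ξ i)).1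
    _ = κ⁻¹ * ∑ j, κ⁻¹ * (η j ⬝ᵥ η j) := by
        rw [← Finset.mul_sum, sum_dotProduct_self_comm]
    _ ≤ Real.sqrt H.det * ∑ j, (H⁻¹ *ᵥ η j) ⬝ᵥ η j := by
        gcongr with j
        · exact Finset.sum_nonneg fun j _ =>
            mul_nonneg hκ' (by simpa using dotProduct_self_star_nonneg (η j))
        · exact hH.inv_mul_dotProduct_le_inv_mulVec_dotProduct (fun v => (hHb v).2) (η j)
    _ = ∑ k, ∑ i, Real.sqrt H.det * H⁻¹ k i * (((B * B) *ᵥ ξ i) ⬝ᵥ ξ k) := by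
        simp only [mul_assoc, ← Finset.mul_sum, hBS.mul_self_mulVec_dotProduct,
          sum_sum_mul_dotProduct_eq_sum_mulVec_dotProduct, η]

theorem stmt18 (κ κ₀ : ℝ) (hκ : 1 ≤ κ) (hκ₀ : 1 ≤ κ₀)
    (H B : M2) (hH : H.PosDef) (hB : B.PosDef) (hBdet : B.det = 1)
    (hHb : ∀ v : V2, κ⁻¹ * (v ⬝ᵥ v) ≤ (H *ᵥ v) ⬝ᵥ v ∧ (H *ᵥ v) ⬝ᵥ v ≤ κ * (v ⬝ᵥ v))
    (hBb : ∀ v : V2, κ₀⁻¹ * (v ⬝ᵥ v) ≤ (B *ᵥ v) ⬝ᵥ v ∧ (B *ᵥ v) ⬝ᵥ v ≤ κ₀ * (v ⬝ᵥ v))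
    (ξ : Fin 2 → V2) :
    (κ⁻¹)^2 * (κ₀⁻¹)^2 * (ξ 0 ⬝ᵥ ξ 0 + ξ 1 ⬝ᵥ ξ 1)
      ≤ ∑ k, ∑ i, Real.sqrt H.det * H⁻¹ k i * (((B * B) *ᵥ ξ i) ⬝ᵥ ξ k) :=
  stmt18_general κ κ₀ hκ hκ₀ H B hH hB hHb hBb ξ

end
end
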